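/- Let d ≥ 1 and ε, L, R > 0 with d/ε ≤ 1. Let F : ℝ^d → ℝ be convex and L-Lipschitz on B(0,R), with a minimizer w* over ℝ^d lying in B(0,R). Set λ = L/(R·√(1 + ε/d)), define the regularized objective F_λ(w) = F(w) + (λ/2)‖w‖₂², let w*_λ be the minimizer of F_λ over B(0,R), and set Δ_λ = 2(L + λR)/λ. Let Π_{B(0,R)} denote the Euclidean projection onto B(0,R), and let ν be the probability measure on ℝ^d whose density with respect to Lebesgue measure is proportional to exp(−(ε/Δ_λ)‖t‖₂). Then ∫_{ℝ^d} F(Π_{B(0,R)}(w*_λ + z)) dν(z) − F(w*) ≤ 8.5·L·R·√(d/ε). -/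

import Mathlib

open MeasureTheory

/-- Euclidean projection onto the closed ball `B(0,R)`:
`Π(u) = u` if `‖u‖ ≤ R`, and `Π(u) = (R/‖u‖)·u` otherwise. -/
noncomputable def projBall {d : ℕ} (R : ℝ) (u : EuclideanSpace ℝ (Fin d)) :
    EuclideanSpace ℝ (Fin d) :=
  if ‖u‖ ≤ R then u else (R / ‖u‖) • u

section aux
open Real Set

lemma aux_int_exp_abs {b : ℝ} (hb : 0 < b) :
    Integrable (fun x : ℝ => Real.exp (-(b * |x|))) := by
  have h1 : IntegrableOn (fun x : ℝ => Real.exp (-(b * |x|))) (Ioi 0) := by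
    refine (integrableOn_congr_fun ?_ measurableSet_Ioi).mpr
      (exp_neg_integrableOn_Ioi 0 hb)
    intro x hx
    simp only [abs_of_pos (show (0:ℝ) < x from hx), neg_mul]
  rw [← integrableOn_univ, ← @Iio_union_Ici _ _ (0 : ℝ), integrableOn_union,
    integrableOn_Ici_iff_integrableOn_Ioi]
  refine ⟨?_, h1⟩
  rw [← (Measure.measurePreserving_neg (volume : Measure ℝ)).integrableOn_comp_preimage
      (Homeomorph.neg ℝ).measurableEmbedding]
  simp only [Function.comp_def, abs_neg, neg_preimage, neg_Iio, neg_neg, neg_zero]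
  exact h1

lemma aux_int_exp_norm {d : ℕ} (hd : 0 < d) {b : ℝ} (hb : 0 < b) :
    Integrable (fun x : EuclideanSpace ℝ (Fin d) => Real.exp (-(b * ‖x‖))) := by
  have hmp := (EuclideanSpace.volume_preserving_symm_measurableEquiv_toLp (Fin d)).symm
  rw [← hmp.integrable_comp_emb (MeasurableEquiv.toLp 2 (Fin d → ℝ)).measurableEmbedding]
  have hd' : (0:ℝ) < d := Nat.cast_pos.mpr hd
  have hbd : 0 < b / d := by positivity
  have hprod : Integrable (fun y : Fin d → ℝ => ∏ i, Real.exp (-(b/d * |y i|))) :=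
    Integrable.fintype_prod (fun _ => aux_int_exp_abs hbd)
  have hcont : Continuous (fun y : Fin d → ℝ =>
      Real.exp (-(b * ‖(MeasurableEquiv.toLp 2 (Fin d → ℝ)) y‖))) := by
    rw [MeasurableEquiv.coe_toLp]
    exact Real.continuous_exp.comp ((continuous_const.mul
      (continuous_norm.comp (PiLp.continuous_toLp 2 (fun _ : Fin d => ℝ)))).neg)
  refine hprod.mono' hcont.aestronglyMeasurable (Filter.Eventually.of_forall fun y => ?_)
  have hnorm : ∀ i, |y i| ≤ ‖(MeasurableEquiv.toLp 2 (Fin d → ℝ)) y‖ := by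
    intro i
    rw [MeasurableEquiv.coe_toLp]
    have := EuclideanSpace.norm_eq (WithLp.toLp 2 y)
    rw [this]
    have h1 : |y i| = Real.sqrt (y i ^ 2) := (Real.sqrt_sq_eq_abs _).symm
    rw [h1]
    apply Real.sqrt_le_sqrt
    have : (WithLp.toLp 2 y).ofLp = y := rfl
    calc y i ^ 2 ≤ ∑ j, y j ^ 2 :=
          Finset.single_le_sum (fun j _ => sq_nonneg (y j)) (Finset.mem_univ i)
      _ = ∑ j, ‖(WithLp.toLp 2 y) j‖ ^ 2 := by
          simp [sq_abs]
  have hsum : (∑ i, |y i|) ≤ d * ‖(MeasurableEquiv.toLp 2 (Fin d → ℝ)) y‖ := by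
    calc (∑ i, |y i|) ≤ ∑ _i : Fin d, ‖(MeasurableEquiv.toLp 2 (Fin d → ℝ)) y‖ :=
          Finset.sum_le_sum (fun i _ => hnorm i)
      _ = d * ‖(MeasurableEquiv.toLp 2 (Fin d → ℝ)) y‖ := by
          simp [Finset.sum_const, nsmul_eq_mul]
  rw [Function.comp_apply, Real.norm_eq_abs, abs_of_pos (Real.exp_pos _),
    ← Real.exp_sum]
  apply Real.exp_le_exp.mpr
  have : (∑ i, -(b / d * |y i|)) = -(b/d * ∑ i, |y i|) := by
    rw [Finset.sum_neg_distrib, ← Finset.mul_sum]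
  rw [MeasurableEquiv.symm_symm, this, neg_le_neg_iff, div_mul_eq_mul_div, div_le_iff₀ hd']
  nlinarith [hsum, hb.le, norm_nonneg ((MeasurableEquiv.toLp 2 (Fin d → ℝ)) y)]

lemma aux_int_norm_exp {d : ℕ} (hd : 0 < d) {b : ℝ} (hb : 0 < b) :
    Integrable (fun x : EuclideanSpace ℝ (Fin d) => ‖x‖ * Real.exp (-(b * ‖x‖))) := by
  have h2 : Integrable (fun x : EuclideanSpace ℝ (Fin d) =>
      (2/b) * Real.exp (-(b/2 * ‖x‖))) := (aux_int_exp_norm hd (by positivity)).const_mul _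
  refine h2.mono' ?_ (Filter.Eventually.of_forall fun x => ?_)
  · exact (continuous_norm.mul (Real.continuous_exp.comp
      ((continuous_const.mul continuous_norm).neg))).aestronglyMeasurable
  · have hx : (0:ℝ) ≤ ‖x‖ := norm_nonneg x
    rw [Real.norm_eq_abs, abs_of_nonneg (by positivity)]
    have key : ‖x‖ * Real.exp (-(b/2 * ‖x‖)) ≤ 2/b := by
      have h1 : b/2 * ‖x‖ + 1 ≤ Real.exp (b/2 * ‖x‖) := Real.add_one_le_exp _
      have h2 : Real.exp (-(b/2 * ‖x‖)) = (Real.exp (b/2 * ‖x‖))⁻¹ := by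
        rw [Real.exp_neg]
      rw [h2]
      rw [mul_inv_le_iff₀ (Real.exp_pos _)]
      have h3 := mul_le_mul_of_nonneg_right h1 (le_of_lt (by positivity : (0:ℝ) < 2/b))
      have h4 : (b/2 * ‖x‖ + 1) * (2/b) = ‖x‖ + 2/b := by field_simp
      have h5 : (0:ℝ) ≤ 2/b := by positivity
      nlinarith
    have hsplit : -(b * ‖x‖) = -(b/2 * ‖x‖) + -(b/2 * ‖x‖) := by ring
    rw [hsplit, Real.exp_add, ← mul_assoc]
    exact mul_le_mul_of_nonneg_right key (Real.exp_pos _).le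

lemma aux_ratio {d : ℕ} (hd : 1 ≤ d) {a : ℝ} (ha : 0 < a) :
    ∫ x : EuclideanSpace ℝ (Fin d), ‖x‖ * Real.exp (-(a * ‖x‖)) =
      ((d:ℝ) / a) * ∫ x : EuclideanSpace ℝ (Fin d), Real.exp (-(a * ‖x‖)) := by
  haveI : Nontrivial (EuclideanSpace ℝ (Fin d)) := by
    have : 0 < Module.finrank ℝ (EuclideanSpace ℝ (Fin d)) := by
      rw [finrank_euclideanSpace_fin]; exact hd
    exact Module.nontrivial_of_finrank_pos this
  have hd' : (0:ℝ) < d := by exact_mod_cast hd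
  set κ := ((volume : Measure (EuclideanSpace ℝ (Fin d))) (Metric.ball 0 1)).toReal with hκ
  have HL := MeasureTheory.integral_fun_norm_addHaar
    (volume : Measure (EuclideanSpace ℝ (Fin d))) (fun r => r * Real.exp (-(a*r)))
  have HR := MeasureTheory.integral_fun_norm_addHaar
    (volume : Measure (EuclideanSpace ℝ (Fin d))) (fun r => Real.exp (-(a*r)))
  simp only [finrank_euclideanSpace_fin, smul_eq_mul, nsmul_eq_mul, ← hκ] at HL HR
  rw [HL, HR]
  have I1 : (∫ y in Set.Ioi (0:ℝ), y ^ (d-1) * (y * Real.exp (-(a*y))))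
      = (1/a)^((d:ℝ)+1) * Real.Gamma ((d:ℝ)+1) := by
    rw [← integral_rpow_mul_exp_neg_mul_Ioi (by positivity : (0:ℝ) < (d:ℝ)+1) ha]
    refine setIntegral_congr_fun measurableSet_Ioi (fun y hy => ?_)
    have hy' : (0:ℝ) < y := hy
    have h1 : y ^ (d-1) * (y * Real.exp (-(a*y))) = y ^ d * Real.exp (-(a*y)) := by
      rw [← mul_assoc, ← pow_succ, Nat.sub_add_cancel hd]
    rw [h1]
    congr 1
    rw [show (d:ℝ) + 1 - 1 = ((d:ℕ):ℝ) by ring, Real.rpow_natCast]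
  have I0 : (∫ y in Set.Ioi (0:ℝ), y ^ (d-1) * Real.exp (-(a*y)))
      = (1/a)^((d:ℝ)) * Real.Gamma ((d:ℝ)) := by
    rw [← integral_rpow_mul_exp_neg_mul_Ioi hd' ha]
    refine setIntegral_congr_fun measurableSet_Ioi (fun y hy => ?_)
    have hy' : (0:ℝ) < y := hy
    congr 1
    rw [show (d:ℝ) - 1 = ((d-1:ℕ):ℝ) by push_cast [Nat.cast_sub hd]; ring,
      Real.rpow_natCast]
  rw [I1, I0, Real.Gamma_add_one (ne_of_gt hd'),
    Real.rpow_add_one (by positivity : (1/a) ≠ 0)]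
  field_simp

open scoped RealInnerProductSpace


lemma projBall_norm_le {d : ℕ} {R : ℝ} (hR : 0 ≤ R) (u : EuclideanSpace ℝ (Fin d)) :
    ‖projBall R u‖ ≤ R := by
  unfold projBall
  split_ifs with h
  · exact h
  · push_neg at h
    have hu : 0 < ‖u‖ := lt_of_le_of_lt hR h
    rw [norm_smul, Real.norm_eq_abs, abs_of_nonneg (by positivity),
      div_mul_cancel₀ _ hu.ne']

lemma projBall_sub_le {d : ℕ} {R : ℝ} (u v : EuclideanSpace ℝ (Fin d)) (hv : ‖v‖ ≤ R) :
    ‖projBall R u - v‖ ≤ ‖u - v‖ := by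
  unfold projBall
  split_ifs with h
  · exact le_refl _
  · push_neg at h
    have hR : 0 ≤ R := le_trans (norm_nonneg v) hv
    have hu : 0 < ‖u‖ := lt_of_le_of_lt hR h
    set t := R / ‖u‖ with ht
    have ht0 : 0 ≤ t := by positivity
    have ht1 : t ≤ 1 := by rw [ht, div_le_one hu]; exact h.le
    have htu : t * ‖u‖ = R := div_mul_cancel₀ _ hu.ne'
    have hsq : ‖t • u - v‖^2 ≤ ‖u - v‖^2 := by
      rw [norm_sub_sq_real, norm_sub_sq_real, real_inner_smul_left, norm_smul,
        Real.norm_eq_abs, abs_of_nonneg ht0, mul_pow]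
      have hiv : ⟪u, v⟫ ≤ ‖u‖ * ‖v‖ := real_inner_le_norm u v
      nlinarith [mul_le_mul_of_nonneg_left hiv (sub_nonneg.2 ht1),
        mul_le_mul_of_nonneg_left hv (mul_nonneg (sub_nonneg.2 ht1) hu.le),
        sq_nonneg ((1-t)*‖u‖), htu, norm_nonneg u, norm_nonneg v]
    have := Real.sqrt_le_sqrt hsq
    rwa [Real.sqrt_sq (norm_nonneg _), Real.sqrt_sq (norm_nonneg _)] at this

set_option maxHeartbeats 1000000 in
lemma aux_arith (d : ℕ) (hd : 1 ≤ d) (ε L R lam Δ : ℝ) (hε : 0 < ε) (hL : 0 < L) (hR : 0 < R)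
    (hde : (d:ℝ)/ε ≤ 1) (hlam : lam = L / (R * Real.sqrt (1 + ε/d)))
    (hΔ : Δ = 2*(L + lam*R)/lam) :
    lam/2*R^2 + L * ((d:ℝ) * Δ / ε) ≤ 8.5 * L * R * Real.sqrt ((d:ℝ)/ε) := by
  have hd0 : (0:ℝ) < d := by exact_mod_cast hd
  set q : ℝ := (d:ℝ)/ε with hqdef
  have hq0 : 0 < q := by positivity
  have hq1 : q ≤ 1 := hde
  set s : ℝ := Real.sqrt (1 + ε/d) with hsdef
  have hεd : (0:ℝ) < ε/d := by positivity
  have hs2 : s^2 = 1 + ε/d := Real.sq_sqrt (by positivity)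
  have hs0 : 0 < s := Real.sqrt_pos.2 (by positivity)
  set sq : ℝ := Real.sqrt q with hsqdef
  have hsq0 : 0 < sq := Real.sqrt_pos.2 hq0
  have hsq2 : sq^2 = q := Real.sq_sqrt hq0.le
  have hlam0 : 0 < lam := by rw [hlam]; positivity
  have hΔ2 : Δ = 2*R*s + 2*R := by
    rw [hΔ, hlam]; field_simp
  have key1 : lam/2*R^2 = L*R*(1/s)/2 := by rw [hlam]; field_simp
  have hqe : q * (ε/d) = 1 := by rw [hqdef]; field_simp
  have hs_ge : 1/sq ≤ s := by
    have h1 : Real.sqrt (ε/d) ≤ s := Real.sqrt_le_sqrt (by linarith)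
    have h2 : ε/(d:ℝ) = q⁻¹ := by
      show ε/(d:ℝ) = ((d:ℝ)/ε)⁻¹
      rw [inv_div]
    rwa [h2, Real.sqrt_inv, ← one_div] at h1
  have hinv : 1/s ≤ sq := by
    rw [div_le_iff₀ hs0]
    have := mul_le_mul_of_nonneg_left hs_ge hsq0.le
    rw [mul_one_div, div_self hsq0.ne'] at this
    linarith
  have key2 : L*((d:ℝ)*Δ/ε) = 2*L*R*(q*s) + 2*L*R*q := by
    rw [hΔ2, hqdef]; field_simp
  have hqs : q*s ≤ 1.5*sq := by
    have h2 : q*s = Real.sqrt (q^2*(1+ε/d)) := by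
      rw [Real.sqrt_mul (sq_nonneg q), Real.sqrt_sq hq0.le, hsdef]
    have h3 : q^2*(1+ε/d) ≤ 2*q := by nlinarith
    have h4 : Real.sqrt (2*q) = Real.sqrt 2 * sq := Real.sqrt_mul (by norm_num) q
    have h5 : Real.sqrt 2 ≤ 1.5 := by
      nlinarith [Real.sq_sqrt (by norm_num : (0:ℝ) ≤ 2), Real.sqrt_nonneg 2]
    calc q*s = Real.sqrt (q^2*(1+ε/d)) := h2
      _ ≤ Real.sqrt (2*q) := Real.sqrt_le_sqrt h3
      _ = Real.sqrt 2 * sq := h4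
      _ ≤ 1.5 * sq := by nlinarith
  have hsq1 : sq ≤ 1 := Real.sqrt_le_one.mpr hq1
  have hq_le_sq : q ≤ sq := by nlinarith
  rw [key1, key2]
  have t1 : L*R*(1/s)/2 ≤ L*R*sq/2 := by
    have := mul_le_mul_of_nonneg_left hinv (by positivity : (0:ℝ) ≤ L*R)
    linarith
  have t2 : 2*L*R*(q*s) ≤ 2*L*R*(1.5*sq) :=
    mul_le_mul_of_nonneg_left hqs (by positivity)
  have t3 : 2*L*R*q ≤ 2*L*R*sq := mul_le_mul_of_nonneg_left hq_le_sq (by positivity)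
  nlinarith [mul_pos (mul_pos hL hR) hsq0]

end aux

/-- Regularized output perturbation for convex, `L`-Lipschitz losses with
`λ = L/(R√(1 + ε/d))`, sensitivity bound `Δ_λ = 2(L + λR)/λ`, and noise density proportional
to `exp(−(ε/Δ_λ)‖t‖)` has excess risk at most `8.5·LR·√(d/ε)` when `d/ε ≤ 1`. -/
theorem stmt_10 (d : ℕ) (hd : 1 ≤ d) (ε L R : ℝ) (hε : 0 < ε) (hL : 0 < L) (hR : 0 < R)
    (hde : (d : ℝ) / ε ≤ 1)
    (F : EuclideanSpace ℝ (Fin d) → ℝ)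
    (hconv : ConvexOn ℝ Set.univ F)
    (hLip : ∀ w ∈ Metric.closedBall (0 : EuclideanSpace ℝ (Fin d)) R,
      ∀ w' ∈ Metric.closedBall (0 : EuclideanSpace ℝ (Fin d)) R,
      |F w - F w'| ≤ L * ‖w - w'‖)
    (wstar : EuclideanSpace ℝ (Fin d))
    (hwsmin : ∀ w, F wstar ≤ F w) (hwsB : ‖wstar‖ ≤ R)
    (lam : ℝ) (hlam : lam = L / (R * Real.sqrt (1 + ε / d)))
    (wlam : EuclideanSpace ℝ (Fin d)) (hwlamB : ‖wlam‖ ≤ R)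
    (hwlammin : ∀ w : EuclideanSpace ℝ (Fin d), ‖w‖ ≤ R →
      F wlam + lam / 2 * ‖wlam‖ ^ 2 ≤ F w + lam / 2 * ‖w‖ ^ 2)
    (Δ : ℝ) (hΔ : Δ = 2 * (L + lam * R) / lam)
    (c : ℝ) (hc : 0 < c)
    (ν : Measure (EuclideanSpace ℝ (Fin d)))
    (hν : ν = volume.withDensity
      (fun t => ENNReal.ofReal (c * Real.exp (-(ε / Δ) * ‖t‖))))
    (hprob : IsProbabilityMeasure ν) :
    (∫ z, F (projBall R (wlam + z)) ∂ν) - F wstar ≤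
      8.5 * L * R * Real.sqrt ((d : ℝ) / ε) := by
  have hd0 : (0:ℝ) < d := by exact_mod_cast hd
  have hs0 : 0 < Real.sqrt (1 + ε/d) := Real.sqrt_pos.2 (by positivity)
  have hlam0 : 0 < lam := by rw [hlam]; positivity
  have hΔ0 : 0 < Δ := by rw [hΔ]; positivity
  set a : ℝ := ε / Δ with hadef
  have ha : 0 < a := by positivity
  set ρ : EuclideanSpace ℝ (Fin d) → ℝ := fun t => c * Real.exp (-(a * ‖t‖)) with hρ
  have hν' : ν = volume.withDensity (fun t => ENNReal.ofReal (ρ t)) := by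
    rw [hν]
    congr 1
    funext t
    rw [hρ, neg_mul, hadef]
  have hρcont : Continuous ρ := continuous_const.mul
    (Real.continuous_exp.comp (continuous_const.mul continuous_norm).neg)
  have hρnn : ∀ t, 0 ≤ ρ t := fun t => by
    have := Real.exp_pos (-(a * ‖t‖)); positivity
  have hone : (∫ z, ρ z) = 1 := by
    have h1 : ν Set.univ = 1 := measure_univ
    rw [hν', withDensity_apply _ MeasurableSet.univ, Measure.restrict_univ] at h1
    rw [integral_eq_lintegral_of_nonneg_ae (Filter.Eventually.of_forall hρnn)
      hρcont.aestronglyMeasurable, h1, ENNReal.toReal_one]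
  have hexp_eq : (∫ z, ρ z) = c * ∫ x : EuclideanSpace ℝ (Fin d), Real.exp (-(a*‖x‖)) := by
    rw [hρ]
    exact integral_const_mul _ _
  have hmean : (∫ z, ‖z‖ ∂ν) = (d:ℝ)/a := by
    have hmeasnn : Measurable fun t : EuclideanSpace ℝ (Fin d) => Real.toNNReal (ρ t) :=
      hρcont.measurable.real_toNNReal
    have e1 : (∫ z, ‖z‖ ∂ν) = ∫ z, Real.toNNReal (ρ z) • ‖z‖ := by
      rw [hν']
      exact integral_withDensity_eq_integral_smul hmeasnn _
    have e2 : (fun z : EuclideanSpace ℝ (Fin d) => Real.toNNReal (ρ z) • ‖z‖)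
        = fun z => c * (‖z‖ * Real.exp (-(a*‖z‖))) := by
      funext z
      rw [NNReal.smul_def, Real.coe_toNNReal _ (hρnn z), hρ, smul_eq_mul]
      ring
    rw [e1, e2, integral_const_mul, aux_ratio hd ha]
    have : c * ((d:ℝ)/a * ∫ x : EuclideanSpace ℝ (Fin d), Real.exp (-(a*‖x‖)))
        = (d:ℝ)/a * (∫ z, ρ z) := by rw [hexp_eq]; ring
    rw [this, hone, mul_one]
  have hFcont : Continuous F := by
    rw [← continuousOn_univ]
    exact hconv.continuousOn isOpen_univ
  have hprojmeas : Measurable (projBall R (d := d)) := by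
    unfold projBall
    exact Measurable.ite (measurableSet_le measurable_norm measurable_const)
      measurable_id ((measurable_const.div measurable_norm).smul measurable_id)
  have hfmeas : AEStronglyMeasurable (fun z => F (projBall R (wlam + z))) ν :=
    (hFcont.measurable.comp (hprojmeas.comp
      (measurable_const.add measurable_id))).aestronglyMeasurable
  have hnormint : Integrable (fun z : EuclideanSpace ℝ (Fin d) => ‖z‖) ν := by
    rw [hν', integrable_withDensity_iff hρcont.measurable.ennreal_ofReal
      (Filter.Eventually.of_forall fun t => ENNReal.ofReal_lt_top)]
    have e3 : (fun z : EuclideanSpace ℝ (Fin d) => ‖z‖ * (ENNReal.ofReal (ρ z)).toReal)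
        = fun z => c * (‖z‖ * Real.exp (-(a*‖z‖))) := by
      funext z
      rw [ENNReal.toReal_ofReal (hρnn z), hρ]
      ring
    rw [e3]
    exact (aux_int_norm_exp hd ha).const_mul c
  have hpt : ∀ z, F (projBall R (wlam + z)) ≤ F wlam + L * ‖z‖ := by
    intro z
    have hmem : projBall R (wlam + z) ∈ Metric.closedBall (0 : EuclideanSpace ℝ (Fin d)) R := by
      rw [Metric.mem_closedBall, dist_zero_right]
      exact projBall_norm_le (le_trans (norm_nonneg _) hwlamB) _
    have hmem' : wlam ∈ Metric.closedBall (0 : EuclideanSpace ℝ (Fin d)) R := by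
      rw [Metric.mem_closedBall, dist_zero_right]; exact hwlamB
    have h1 := (abs_le.1 (hLip _ hmem _ hmem')).2
    have h2 : ‖projBall R (wlam + z) - wlam‖ ≤ ‖z‖ := by
      have := projBall_sub_le (wlam + z) wlam hwlamB
      rwa [add_sub_cancel_left] at this
    have h3 := mul_le_mul_of_nonneg_left h2 hL.le
    linarith
  have hgint : Integrable (fun z : EuclideanSpace ℝ (Fin d) => F wlam + L * ‖z‖) ν :=
    (integrable_const _).add (hnormint.const_mul L)
  have hfint : Integrable (fun z => F (projBall R (wlam + z))) ν := by
    refine Integrable.mono' (g := fun z : EuclideanSpace ℝ (Fin d) =>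
      (|F wstar| + |F wlam|) + L * ‖z‖)
      ((integrable_const _).add (hnormint.const_mul L)) hfmeas ?_
    filter_upwards with z
    have hLz : 0 ≤ L * ‖z‖ := mul_nonneg hL.le (norm_nonneg z)
    rw [Real.norm_eq_abs, abs_le]
    constructor
    · have h1 := hwsmin (projBall R (wlam + z))
      have h2 := neg_abs_le (F wstar)
      have h3 := abs_nonneg (F wlam)
      linarith
    · have h1 := hpt z
      have h2 := le_abs_self (F wlam)
      have h3 := abs_nonneg (F wstar)
      linarith
  have hint_le : (∫ z, F (projBall R (wlam + z)) ∂ν) ≤ F wlam + L * ((d:ℝ)/a) := by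
    have h1 := integral_mono hfint hgint hpt
    rwa [integral_add (integrable_const _) (hnormint.const_mul L), integral_const,
      probReal_univ, one_smul, integral_const_mul, hmean] at h1
  have hreg : F wlam - F wstar ≤ lam/2 * R^2 := by
    have h1 := hwlammin wstar hwsB
    have h2 : ‖wstar‖^2 ≤ R^2 := by nlinarith [norm_nonneg wstar]
    nlinarith [sq_nonneg ‖wlam‖, hlam0]
  have hda : L * ((d:ℝ)/a) = L * ((d:ℝ) * Δ / ε) := by
    rw [hadef, div_div_eq_mul_div]
  have harith := aux_arith d hd ε L R lam Δ hε hL hR hde hlam hΔ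
  linarith
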